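/- Fix integers A, a and a positive integer C with a ∈ {0,1,2,3}, gcd(A,C) = 1, 0 < A/C < 1, and A/C ≠ 1/2 when a is odd. Then for all τ ∈ ℍ: if C is even, V_α(τ) − (−1)^{A + C/2} e(C/8) e(C(2A−C)²/(8C²)) V_α(τ + C) = 0; and if C is odd, V_α(τ) + e(C/4) e((2A−C)²/(4C)) V_α(τ + 2C) = 0. -/

import Mathlib

open Complex Real

noncomputable section

/-- `e(z) = e^{2πiz}`. -/
def ee (z : ℂ) : ℂ := Complex.exp (2 * Real.pi * Complex.I * z)

/-- Jacobi theta: `ϑ(z;τ) = ∑_{v∈ℤ+1/2} e^{πiv²τ + 2πiv(z+1/2)}`. -/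
def jTheta (z τ : ℂ) : ℂ :=
  ∑' n : ℤ, Complex.exp (Real.pi * Complex.I * ((n : ℂ) + 1/2)^2 * τ
      + 2 * Real.pi * Complex.I * ((n : ℂ) + 1/2) * (z + 1/2))

/-- Zwegers' μ-function. -/
def zMu (u v τ : ℂ) : ℂ :=
  Complex.exp (Real.pi * Complex.I * u) / jTheta v τ *
    ∑' n : ℤ, (-1 : ℂ)^n * Complex.exp (2 * Real.pi * Complex.I * (n : ℂ) * v)
      * Complex.exp (Real.pi * Complex.I * (n : ℂ) * ((n : ℂ) + 1) * τ)
      / (1 - Complex.exp (2 * Real.pi * Complex.I * u)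
            * Complex.exp (2 * Real.pi * Complex.I * (n : ℂ) * τ))

/-- Zwegers' nonholomorphic `R` function. -/
def zR (u τ : ℂ) : ℂ :=
  ∑' n : ℤ,
    (((Real.sign ((n : ℝ) + 1/2)
        - 2 * ∫ t in (0:ℝ)..((((n : ℝ) + 1/2) + u.im / τ.im) * Real.sqrt (2 * τ.im)),
            Real.exp (-Real.pi * t^2)) : ℝ) : ℂ)
      * (-1 : ℂ)^n
      * Complex.exp (Real.pi * Complex.I * ((n : ℂ) + 1/2)^2 * τ
          - 2 * Real.pi * Complex.I * ((n : ℂ) + 1/2) * u)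

/-- Completed `μ̂`. -/
def zMuHat (u v τ : ℂ) : ℂ := zMu u v τ + zR (u - v) τ / 2

/-- `V_α(τ) = i^{a+1} q^{-(2A-C)²/(8C²)} μ(2α, τ/2; τ)` with `2α = (A/C)τ + a/2`. -/
def Valpha (A : ℤ) (C : ℕ) (a : ℤ) (τ : ℂ) : ℂ :=
  Complex.I^(a+1) * ee (-(((2*A - (C:ℤ) : ℤ) : ℂ)^2 / (8 * (C:ℂ)^2)) * τ)
    * zMu ((A : ℂ)/(C : ℂ) * τ + (a : ℂ)/2) (τ/2) τ

/-- Completed `V̂_α`. -/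
def ValphaHat (A : ℤ) (C : ℕ) (a : ℤ) (τ : ℂ) : ℂ :=
  Complex.I^(a+1) * ee (-(((2*A - (C:ℤ) : ℤ) : ℂ)^2 / (8 * (C:ℂ)^2)) * τ)
    * zMuHat ((A : ℂ)/(C : ℂ) * τ + (a : ℂ)/2) (τ/2) τ

/-- Mordell integral. -/
def mordellH (u τ : ℂ) : ℂ :=
  ∫ x : ℝ, Complex.exp (Real.pi * Complex.I * τ * (x:ℂ)^2 - 2 * Real.pi * u * (x:ℂ))
    / Complex.cosh (Real.pi * (x:ℂ))

/-- Zwegers' weight 3/2 theta functions `g_{a,b}`. -/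
def gab (a b : ℝ) (τ : ℂ) : ℂ :=
  ∑' n : ℤ, ((a : ℂ) + (n : ℂ))
    * Complex.exp (Real.pi * Complex.I * ((a:ℂ) + (n:ℂ))^2 * τ
        + 2 * Real.pi * Complex.I * ((a:ℂ) + (n:ℂ)) * (b:ℂ))

/-- Integral along the vertical ray from `c` to `i∞`. -/
def rayIntegral (c : ℂ) (f : ℂ → ℂ) : ℂ :=
  ∫ t in Set.Ioi (0:ℝ), Complex.I * f (c + (t : ℂ) * Complex.I)

/-- The function `δ_{x,y}(τ)`. -/
def deltaXY (x y : ℝ) (τ : ℂ) : ℂ :=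
  rayIntegral 0 (fun z => gab (x + 1/2) (y + 1/2) z / (-Complex.I * (z + τ)) ^ (1/2 : ℂ))
    + ee ((x:ℂ) * ((y:ℂ) + 1/2)) * ee (-((x:ℂ)^2/2) * τ) * mordellH ((x:ℂ)*τ - (y:ℂ)) τ

/-- The eta multiplier `ψ(γ)` for `γ = (a b; c d)`. -/
def etaPsi (a b c d : ℤ) : ℂ :=
  if Odd c then
    ((jacobiSym d c.natAbs : ℤ) : ℂ)
      * Complex.exp (Real.pi * Complex.I / 12 * (((a+d)*c - b*d*(c^2-1) - 3*c : ℤ) : ℂ))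
  else
    (((if d < 0 ∧ c < 0 then -1 else 1) * jacobiSym c d.natAbs : ℤ) : ℂ)
      * Complex.exp (Real.pi * Complex.I / 12
          * (((a+d)*c - b*d*(c^2-1) + 3*d - 3 - 3*c*d : ℤ) : ℂ))

end



/-! Shifting `τ` by an even integer `2q` with `(A/C)·2q = p ∈ ℤ` moves the arguments of `μ(2α, τ/2; τ)`
by the integers `p`, `q` and `2q`. Each of these shifts only multiplies `μ` by a root of unity (the
elliptic transformations in `u` and `v`; for `τ ↦ τ + 1`, the evenness of `n(n+1)` together with
`ϑ(v; τ + 1) = e(1/8) ϑ(v; τ)`), so `V_α(τ + 2q)` is an explicit multiple of `V_α(τ)`. For even `C`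
take `q = C/2`, `p = A`; for odd `C` take `q = C`, `p = 2A`. -/

lemma exp_pi_mul_I_mul_int (m : ℤ) : Complex.exp (Real.pi * Complex.I * m) = (-1) ^ m := by
  rw [mul_comm, Complex.exp_int_mul, Complex.exp_pi_mul_I]

lemma ee_add (x y : ℂ) : ee (x + y) = ee x * ee y := by
  rw [ee, ee, ee, mul_add, Complex.exp_add]

lemma ee_neg (x : ℂ) : ee (-x) = (ee x)⁻¹ := by
  rw [ee, ee, mul_neg, Complex.exp_neg]

lemma ee_zero : ee 0 = 1 := by
  simp [ee]

lemma jTheta_add_int_right (z τ : ℂ) (k : ℤ) :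
    jTheta z (τ + k) = ee (k / 8) * jTheta z τ := by
  rw [jTheta, jTheta, ← tsum_mul_left]
  refine tsum_congr fun n => ?_
  obtain ⟨j, hj⟩ := Int.even_mul_succ_self n
  have hj' : (n : ℂ) * (n + 1) = j + j := by exact_mod_cast hj
  rw [ee, ← Complex.exp_add]
  refine Complex.exp_eq_exp_iff_exists_int.2 ⟨j * k, ?_⟩
  push_cast
  linear_combination Real.pi * Complex.I * k * hj'

lemma jTheta_add_int_left (z τ : ℂ) (k : ℤ) :
    jTheta (z + k) τ = (-1) ^ k * jTheta z τ := by
  rw [jTheta, jTheta, ← tsum_mul_left]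
  refine tsum_congr fun n => ?_
  rw [← exp_pi_mul_I_mul_int, ← Complex.exp_add]
  refine Complex.exp_eq_exp_iff_exists_int.2 ⟨n * k, ?_⟩
  push_cast
  ring

lemma zMu_u_add_int (u v τ : ℂ) (k : ℤ) :
    zMu (u + k) v τ = (-1) ^ k * zMu u v τ := by
  have hhalf : Complex.exp (Real.pi * Complex.I * (u + k))
      = (-1) ^ k * Complex.exp (Real.pi * Complex.I * u) := by
    rw [mul_add, Complex.exp_add, exp_pi_mul_I_mul_int, mul_comm]
  have hexp : Complex.exp (2 * Real.pi * Complex.I * (u + k))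
      = Complex.exp (2 * Real.pi * Complex.I * u) := by
    refine Complex.exp_eq_exp_iff_exists_int.2 ⟨k, ?_⟩
    ring
  rw [zMu, zMu, hhalf, hexp]
  ring

lemma zMu_v_add_int (u v τ : ℂ) (k : ℤ) :
    zMu u (v + k) τ = (-1) ^ k * zMu u v τ := by
  have hexp (n : ℤ) : Complex.exp (2 * Real.pi * Complex.I * n * (v + k))
      = Complex.exp (2 * Real.pi * Complex.I * n * v) := by
    refine Complex.exp_eq_exp_iff_exists_int.2 ⟨n * k, ?_⟩
    push_cast
    ring
  have hsign : ((-1 : ℂ) ^ k)⁻¹ = (-1) ^ k := by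
    rw [← inv_zpow, inv_neg, inv_one]
  simp only [zMu, hexp, jTheta_add_int_left, mul_inv, hsign, div_eq_mul_inv]
  ring

lemma zMu_tau_add_int (u v τ : ℂ) (k : ℤ) :
    zMu u v (τ + k) = ee (-(k / 8)) * zMu u v τ := by
  have hquad (n : ℤ) : Complex.exp (Real.pi * Complex.I * n * (n + 1) * (τ + k))
      = Complex.exp (Real.pi * Complex.I * n * (n + 1) * τ) := by
    obtain ⟨j, hj⟩ := Int.even_mul_succ_self n
    have hj' : (n : ℂ) * (n + 1) = j + j := by exact_mod_cast hj
    refine Complex.exp_eq_exp_iff_exists_int.2 ⟨j * k, ?_⟩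
    push_cast
    linear_combination Real.pi * Complex.I * k * hj'
  have hlin (n : ℤ) : Complex.exp (2 * Real.pi * Complex.I * n * (τ + k))
      = Complex.exp (2 * Real.pi * Complex.I * n * τ) := by
    refine Complex.exp_eq_exp_iff_exists_int.2 ⟨n * k, ?_⟩
    push_cast
    ring
  simp only [zMu, hquad, hlin, jTheta_add_int_right, ee_neg, mul_inv, div_eq_mul_inv]
  ring

lemma Valpha_add_two_mul_int (A a p q : ℤ) (C : ℕ) (hC : C ≠ 0)
    (hpq : A * (2 * q) = p * C) (τ : ℂ) :
    Valpha A C a (τ + 2 * q)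
      = (-1) ^ (p + q)
        * ee (-(((2 * A - (C : ℤ) : ℤ) : ℂ) ^ 2 / (8 * (C : ℂ) ^ 2)) * (2 * q) - q / 4)
        * Valpha A C a τ := by
  have hpq' : (A : ℂ) * (2 * q) = p * C := by exact_mod_cast hpq
  have hu : (A : ℂ) / C * (τ + 2 * q) + a / 2 = ((A : ℂ) / C * τ + a / 2) + p := by
    field_simp
    linear_combination 2 * hpq'
  have hv : (τ + 2 * q) / 2 = τ / 2 + q := by ring
  have htau : τ + 2 * (q : ℂ) = τ + ((2 * q : ℤ) : ℂ) := by push_cast; ring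
  have hphase : ee (-(((2 * A - (C : ℤ) : ℤ) : ℂ) ^ 2 / (8 * (C : ℂ) ^ 2)) * (2 * q) - q / 4)
      = ee (-(((2 * A - (C : ℤ) : ℤ) : ℂ) ^ 2 / (8 * (C : ℂ) ^ 2)) * (2 * q))
        * ee (-(((2 * q : ℤ) : ℂ) / 8)) := by
    rw [← ee_add]
    congr 1
    push_cast
    ring
  rw [Valpha, Valpha, hu, hv, htau, zMu_tau_add_int, zMu_u_add_int, zMu_v_add_int, ← htau,
    mul_add, ee_add, hphase, zpow_add₀ (by norm_num : (-1 : ℂ) ≠ 0) p q]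
  ring

lemma ee_mul_ee_mul_ee_of_add_eq_zero {x y z : ℂ} (h : x + y + z = 0) :
    ee x * ee y * ee z = 1 := by
  rw [← ee_add, ← ee_add, h, ee_zero]

lemma sub_zpow_mul_ee_mul_ee_mul_eq_zero (V : ℂ) (k : ℤ) {x y z : ℂ} (h : x + y + z = 0) :
    V - (-1) ^ k * ee x * ee y * ((-1) ^ k * ee z * V) = 0 := by
  have hsign : (-1 : ℂ) ^ k * (-1) ^ k = 1 := by
    rw [← mul_zpow]; norm_num
  linear_combination (-V) * ee_mul_ee_mul_ee_of_add_eq_zero h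
    - ee x * ee y * ee z * V * hsign

lemma add_ee_mul_ee_mul_neg_eq_zero (V : ℂ) {x y z : ℂ} (h : x + y + z = 0) :
    V + ee x * ee y * (-1 * ee z * V) = 0 := by
  linear_combination (-V) * ee_mul_ee_mul_ee_of_add_eq_zero h

theorem stmt19_general (A a : ℤ) (C : ℕ) (hC : 0 < C) :
    (Even C → ∀ τ : ℂ, 0 < τ.im →
      Valpha A C a τ
        - (-1 : ℂ)^(A + (C:ℤ)/2) * ee ((C:ℂ)/8)
          * ee ((C:ℂ) * ((2*A - (C:ℤ) : ℤ):ℂ)^2 / (8 * (C:ℂ)^2))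
          * Valpha A C a (τ + (C:ℂ)) = 0) ∧
    (Odd C → ∀ τ : ℂ, 0 < τ.im →
      Valpha A C a τ
        + ee ((C:ℂ)/4) * ee (((2*A - (C:ℤ) : ℤ):ℂ)^2 / (4 * (C:ℂ)))
          * Valpha A C a (τ + 2*(C:ℂ)) = 0) := by
  constructor
  · rintro ⟨m, rfl⟩ τ -
    have hshift := Valpha_add_two_mul_int A a A m (m + m) hC.ne' (by push_cast; ring) τ
    rw [show τ + ((m + m : ℕ) : ℂ) = τ + 2 * (m : ℤ) by push_cast; ring, hshift,
      show A + ((m + m : ℕ) : ℤ) / 2 = A + m by omega]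
    exact sub_zpow_mul_ee_mul_ee_mul_eq_zero _ _ (by push_cast; ring)
  · rintro hodd τ -
    have hshift := Valpha_add_two_mul_int A a (2 * A) C C hC.ne' (by ring) τ
    have hsign : (-1 : ℂ) ^ (2 * A + C) = -1 := by
      rw [zpow_add₀ (by norm_num), (even_two_mul A).neg_one_zpow, one_mul, zpow_natCast,
        hodd.neg_one_pow]
    have hC0 : (C : ℂ) ≠ 0 := Nat.cast_ne_zero.mpr hC.ne'
    rw [show τ + 2 * (C : ℂ) = τ + 2 * ((C : ℤ) : ℂ) by push_cast; ring, hshift, hsign]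
    exact add_ee_mul_ee_mul_neg_eq_zero _ (by push_cast; field_simp; ring)

/-- the `T`-transformations of `V_α`, for `C` even and `C` odd. -/
theorem stmt19 (A a : ℤ) (C : ℕ) (hC : 0 < C)
    (ha : a = 0 ∨ a = 1 ∨ a = 2 ∨ a = 3) (hgcd : Int.gcd A (C:ℤ) = 1)
    (hpos : 0 < (A:ℚ)/(C:ℚ)) (hlt : (A:ℚ)/(C:ℚ) < 1)
    (hhalf : Odd a → (A:ℚ)/(C:ℚ) ≠ 1/2) :
    (Even C → ∀ τ : ℂ, 0 < τ.im →
      Valpha A C a τ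
        - (-1 : ℂ)^(A + (C:ℤ)/2) * ee ((C:ℂ)/8)
          * ee ((C:ℂ) * ((2*A - (C:ℤ) : ℤ):ℂ)^2 / (8 * (C:ℂ)^2))
          * Valpha A C a (τ + (C:ℂ)) = 0) ∧
    (Odd C → ∀ τ : ℂ, 0 < τ.im →
      Valpha A C a τ
        + ee ((C:ℂ)/4) * ee (((2*A - (C:ℤ) : ℤ):ℂ)^2 / (4 * (C:ℂ)))
          * Valpha A C a (τ + 2*(C:ℂ)) = 0) :=
  stmt19_general A a C hC
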